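/- arXiv:2603.08694 — 5 statements merged into one kernel-verified Lean document; each statement's English description precedes it below -/
import Mathlib

section
/- Let G be a finite simple graph whose edge set can be partitioned into at most α forests (i.e., G has arboricity at most α). Then the sum over all edges (u,v) of min(deg(u), deg(v)) is at most 2·m·α, where m is the number of edges of G. -/
/-!
Root every component of a forest and send each edge to its endpoint farther from the root. In a
forest a vertex has at most one neighbour closer to the root, so this map is injective on edges.
Hence the edges of one forest contribute `∑ min (deg u) (deg v) ≤ ∑_v deg v = 2m`, and summing
over the `α` forests of the decomposition gives `2mα`.
-/

/-- `G` has arboricity at most `α`: its edge set can be partitioned into at most `α` forests. -/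
def HasArboricityLE {V : Type*} (G : SimpleGraph V) (α : ℕ) : Prop :=
  ∃ f : Sym2 V → Fin α,
    ∀ i : Fin α, (SimpleGraph.fromEdgeSet {e | e ∈ G.edgeSet ∧ f e = i}).IsAcyclic

open Finset

lemma Sym2.lift_min_le_of_mem {α M : Type*} [LinearOrder M] (f : α → M) {x : α} {e : Sym2 α}
    (h : x ∈ e) :
    Sym2.lift ⟨fun u v => min (f u) (f v), fun _ _ => min_comm _ _⟩ e ≤ f x := by
  induction e using Sym2.ind with
  | _ a b => rcases Sym2.mem_iff.mp h with rfl | rfl <;> simp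

namespace SimpleGraph

variable {V : Type*} {G : SimpleGraph V}

lemma IsAcyclic.eq_penultimate_of_adj_of_dist_lt (hG : G.IsAcyclic) {r x y : V}
    {p : G.Walk r x} (hp : p.IsPath) (hadj : G.Adj x y) (hd : G.dist r y < G.dist r x) :
    y = p.penultimate := by
  classical
  obtain ⟨q, hq, hql⟩ := (p.reachable.trans hadj.reachable).exists_path_of_dist
  have hx : x ∉ q.support := fun hx =>
    hd.not_ge ((G.dist_le (q.takeUntil x hx)).trans (hql ▸ q.length_takeUntil_le_length hx))
  exact hG.eq_penultimate_of_adj_end hp hadj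
    (hG.mem_support_of_ne_mem_support_of_adj_of_isPath hp hq hadj hx)

lemma IsAcyclic.eq_of_adj_of_dist_lt (hG : G.IsAcyclic) {r x y₁ y₂ : V} (hr : G.Reachable r x)
    (h₁ : G.Adj x y₁) (h₂ : G.Adj x y₂) (hd₁ : G.dist r y₁ < G.dist r x)
    (hd₂ : G.dist r y₂ < G.dist r x) : y₁ = y₂ := by
  obtain ⟨p, hp⟩ := hr.exists_isPath
  rw [hG.eq_penultimate_of_adj_of_dist_lt hp h₁ hd₁, hG.eq_penultimate_of_adj_of_dist_lt hp h₂ hd₂]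

lemma IsAcyclic.exists_injOn_mem_edgeSet (hG : G.IsAcyclic) :
    ∃ φ : Sym2 V → V, (∀ e ∈ G.edgeSet, φ e ∈ e) ∧ Set.InjOn φ G.edgeSet := by
  let root (v : V) : V := (G.connectedComponentMk v).out
  have reachable_root (v : V) : G.Reachable (root v) v :=
    ConnectedComponent.exact (G.connectedComponentMk v).out_eq
  have root_eq_of_adj {v w : V} (h : G.Adj v w) : root v = root w := by
    simp only [root, ConnectedComponent.connectedComponentMk_eq_of_adj h]
  have head : ∀ e : Sym2 V, ∃ x, e ∈ G.edgeSet →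
      ∃ y, e = s(x, y) ∧ G.Adj x y ∧ G.dist (root x) y < G.dist (root x) x := by
    intro e
    induction e using Sym2.ind with
    | _ v w =>
      by_cases hvw : G.Adj v w
      · rcases hG.dist_eq_dist_add_one_of_adj_of_reachable (root v) hvw (reachable_root v)
          with h | h
        · exact ⟨v, fun _ => ⟨w, rfl, hvw, by omega⟩⟩
        · exact ⟨w, fun _ => ⟨v, Sym2.eq_swap, hvw.symm, by rw [← root_eq_of_adj hvw]; omega⟩⟩
      · exact ⟨v, fun h => absurd h hvw⟩
  choose φ hφ using head
  refine ⟨φ, fun e he => ?_, fun e₁ he₁ e₂ he₂ h => ?_⟩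
  · obtain ⟨y, hy, -⟩ := hφ e he
    exact Sym2.mem_iff_exists.mpr ⟨y, hy⟩
  · obtain ⟨y₁, hxy₁, h₁, hd₁⟩ := hφ e₁ he₁
    obtain ⟨y₂, hxy₂, h₂, hd₂⟩ := hφ e₂ he₂
    rw [h] at hxy₁ h₁ hd₁
    rw [hxy₁, hG.eq_of_adj_of_dist_lt (reachable_root _) h₁ h₂ hd₁ hd₂, ← hxy₂]

lemma IsAcyclic.sum_lift_min_le_sum [Fintype V] {M : Type*} [AddCommMonoid M] [LinearOrder M]
    [CanonicallyOrderedAdd M] (hG : G.IsAcyclic) {s : Finset (Sym2 V)} (hs : ↑s ⊆ G.edgeSet)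
    (f : V → M) :
    ∑ e ∈ s, Sym2.lift ⟨fun u v => min (f u) (f v), fun _ _ => min_comm _ _⟩ e ≤ ∑ v, f v := by
  classical
  obtain ⟨φ, hφ, hφinj⟩ := hG.exists_injOn_mem_edgeSet
  calc ∑ e ∈ s, Sym2.lift ⟨fun u v => min (f u) (f v), fun _ _ => min_comm _ _⟩ e
      ≤ ∑ e ∈ s, f (φ e) := sum_le_sum fun e he => Sym2.lift_min_le_of_mem f (hφ e (hs he))
    _ = ∑ v ∈ s.image φ, f v := (sum_image (hφinj.mono hs)).symm
    _ ≤ ∑ v, f v := sum_le_sum_of_subset (subset_univ _)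

end SimpleGraph

open SimpleGraph

theorem chiba_nishizeki_general {V : Type*} [Fintype V]
    (G : SimpleGraph V) [DecidableRel G.Adj] (α : ℕ) (hG : HasArboricityLE G α) :
    ∑ e ∈ G.edgeFinset,
        Sym2.lift ⟨fun u v => min (G.degree u) (G.degree v), fun u v => min_comm _ _⟩ e
      ≤ 2 * G.edgeFinset.card * α := by
  obtain ⟨f, hf⟩ := hG
  set w := Sym2.lift ⟨fun u v => min (G.degree u) (G.degree v), fun _ _ => min_comm _ _⟩
  have forest_bound (i : Fin α) : ∑ e ∈ G.edgeFinset with f e = i, w e ≤ 2 * #G.edgeFinset := by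
    rw [← G.sum_degrees_eq_twice_card_edges]
    refine (hf i).sum_lift_min_le_sum (fun e he => ?_) fun v => G.degree v
    rw [coe_filter, Set.mem_ofPred_eq, mem_edgeFinset] at he
    rw [edgeSet_fromEdgeSet]
    exact ⟨he, G.not_isDiag_of_mem_edgeSet he.1⟩
  calc ∑ e ∈ G.edgeFinset, w e = ∑ i, ∑ e ∈ G.edgeFinset with f e = i, w e :=
        (sum_fiberwise _ f _).symm
    _ ≤ ∑ _i : Fin α, 2 * #G.edgeFinset := sum_le_sum fun i _ => forest_bound i
    _ = 2 * #G.edgeFinset * α := by simp [mul_comm]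

theorem chiba_nishizeki {V : Type*} [Fintype V] [DecidableEq V]
    (G : SimpleGraph V) [DecidableRel G.Adj] (α : ℕ) (hG : HasArboricityLE G α) :
    ∑ e ∈ G.edgeFinset,
        Sym2.lift ⟨fun u v => min (G.degree u) (G.degree v), fun u v => min_comm _ _⟩ e
      ≤ 2 * G.edgeFinset.card * α :=
  chiba_nishizeki_general G α hG
end

section
/- In any finite simple graph G with m edges, orient each edge (u,v) from u to v whenever deg(u) < deg(v), or deg(u) = deg(v) and u precedes v in a fixed linear order on vertices. Then the maximum outdegree in this orientation is at most √(2m). -/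
/-- The degree ordering: `u ≺ v` iff `deg u < deg v`, or degrees are equal and `u < v`
in the fixed linear order on vertices. -/
def DegPrec {V : Type*} [Fintype V] [LinearOrder V] (G : SimpleGraph V)
    [DecidableRel G.Adj] (u v : V) : Prop :=
  G.degree u < G.degree v ∨ (G.degree u = G.degree v ∧ u < v)

instance {V : Type*} [Fintype V] [LinearOrder V] (G : SimpleGraph V) [DecidableRel G.Adj] :
    DecidableRel (DegPrec G) := fun _ _ => by unfold DegPrec; infer_instance

/-- Out-degree of `u` in the degree orientation. -/
def outDeg {V : Type*} [Fintype V] [LinearOrder V] (G : SimpleGraph V)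
    [DecidableRel G.Adj] (u : V) : ℕ :=
  ((G.neighborFinset u).filter (fun v => DegPrec G u v)).card

/-- The maximum out-degree in the degree orientation is at most `√(2m)`. -/
theorem outDeg_le_sqrt {V : Type*} [Fintype V] [LinearOrder V]
    (G : SimpleGraph V) [DecidableRel G.Adj] (u : V) :
    (outDeg G u : ℝ) ≤ Real.sqrt (2 * G.edgeFinset.card) := by
  set S := (G.neighborFinset u).filter (fun v => DegPrec G u v) with hS
  have hd : outDeg G u = S.card := rfl
  -- outDeg u ≤ deg u
  have h1 : outDeg G u ≤ G.degree u := by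
    rw [hd, ← SimpleGraph.card_neighborFinset_eq_degree]
    exact Finset.card_filter_le _ _
  -- each v ∈ S has deg u ≤ deg v
  have h2 : ∀ v ∈ S, outDeg G u ≤ G.degree v := by
    intro v hv
    rw [hS, Finset.mem_filter] at hv
    rcases hv.2 with h | h
    · exact h1.trans h.le
    · exact h1.trans h.1.le
  have key : outDeg G u * outDeg G u ≤ 2 * G.edgeFinset.card := by
    calc outDeg G u * outDeg G u = ∑ _v ∈ S, outDeg G u := by
          rw [Finset.sum_const, smul_eq_mul, hd, mul_comm]
      _ ≤ ∑ v ∈ S, G.degree v := Finset.sum_le_sum h2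
      _ ≤ ∑ v, G.degree v := Finset.sum_le_sum_of_subset (Finset.subset_univ S)
      _ = 2 * G.edgeFinset.card := G.sum_degrees_eq_twice_card_edges
  rw [show (2 : ℝ) * G.edgeFinset.card = ((2 * G.edgeFinset.card : ℕ) : ℝ) by push_cast; ring]
  rw [Real.le_sqrt (by positivity)]
  calc ((outDeg G u : ℝ)) ^ 2 = ((outDeg G u * outDeg G u : ℕ) : ℝ) := by push_cast; ring
    _ ≤ _ := by exact_mod_cast key
  positivity
end

section
/- Every finite simple graph G with m edges has arboricity at most √(2m); that is, the edge set of G can be partitioned into at most ⌊√(2m)⌋ forests. -/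
open Finset

namespace SimpleGraph

variable {V : Type*}

/-- A cycle through `v` leaves `v` along two different edges, so it cannot pass through a vertex
with at most one neighbour. -/
theorem IsAcyclic.of_deleteIncidenceSet {H : SimpleGraph V} {v : V}
    (hv : (H.neighborSet v).Subsingleton) (h : (H.deleteIncidenceSet v).IsAcyclic) :
    H.IsAcyclic := by
  classical
  intro w c hc
  by_cases hvc : v ∈ c.support
  · let c' := c.rotate v hvc
    have hc' : c'.IsCycle := hc.rotate hvc
    exact hc'.snd_ne_penultimate
      (hv (c'.adj_snd hc'.not_nil) (c'.adj_penultimate hc'.not_nil).symm)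
  · have hedges : ∀ e ∈ c.edges, e ∉ H.incidenceSet v := fun e he hve =>
      hvc (c.mem_support_of_mem_edges he hve.2)
    exact h (c.toDeleteEdges _ hedges) (hc.transfer _)

theorem mul_succ_le_two_mul_card_edgeFinset [Fintype V] {G : SimpleGraph V} [DecidableRel G.Adj]
    {d : ℕ} (hG : G ≠ ⊥) (hd : ∀ v, 0 < G.degree v → d ≤ G.degree v) :
    d * (d + 1) ≤ 2 * #G.edgeFinset := by
  classical
  obtain ⟨a, b, hab⟩ := ne_bot_iff_exists_adj.mp hG
  set W := univ.filter (0 < G.degree ·)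
  have hW_mem : ∀ {u w}, G.Adj u w → u ∈ W :=
    fun huw => mem_filter.mpr ⟨mem_univ _, (G.degree_pos_iff_exists_adj _).mpr ⟨_, huw⟩⟩
  have hW : d + 1 ≤ #W := calc
    d + 1 ≤ G.degree a + 1 := by gcongr; exact hd a (mem_filter.mp (hW_mem hab)).2
    _ = #(insert a (G.neighborFinset a)) := by
      rw [card_insert_of_notMem (by simp), card_neighborFinset_eq_degree]
    _ ≤ #W := card_le_card <| insert_subset_iff.mpr
      ⟨hW_mem hab, fun u hu => hW_mem ((mem_neighborFinset _ _ _).mp hu).symm⟩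
  calc d * (d + 1) ≤ #W * d := by rw [mul_comm]; gcongr
    _ = ∑ _ ∈ W, d := by rw [sum_const, smul_eq_mul]
    _ ≤ ∑ w ∈ W, G.degree w := sum_le_sum fun w hw => hd w (mem_filter.mp hw).2
    _ ≤ ∑ w, G.degree w := sum_le_sum_of_subset (subset_univ W)
    _ = 2 * #G.edgeFinset := G.sum_degrees_eq_twice_card_edges

end SimpleGraph

open SimpleGraph

section

variable {V : Type*}

theorem HasArboricityLE.of_deleteIncidenceSet {G : SimpleGraph V} {v : V}
    [Fintype (G.neighborSet v)] {k : ℕ} (hv : G.degree v ≤ k)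
    (h : HasArboricityLE (G.deleteIncidenceSet v) k) : HasArboricityLE G k := by
  classical
  obtain ⟨f, hf⟩ := h
  obtain ⟨emb⟩ : Nonempty (G.neighborSet v ↪ Fin k) :=
    Function.Embedding.nonempty_of_card_le (by rwa [card_neighborSet_eq_degree, Fintype.card_fin])
  let c : G.incidenceSet v ↪ Fin k := (G.incidenceSetEquivNeighborSet v).toEmbedding.trans emb
  refine ⟨fun e => if he : e ∈ G.incidenceSet v then c ⟨e, he⟩ else f e, fun i => ?_⟩
  apply IsAcyclic.of_deleteIncidenceSet (v := v)
  · intro u hu w hw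
    simp only [mem_neighborSet, fromEdgeSet_adj, Set.mem_ofPred_eq] at hu hw
    have hinc : ∀ {x}, s(v, x) ∈ G.edgeSet → s(v, x) ∈ G.incidenceSet v :=
      fun hx => ⟨hx, Sym2.mem_mk_left _ _⟩
    rw [dif_pos (hinc hu.1.1)] at hu
    rw [dif_pos (hinc hw.1.1)] at hw
    exact Sym2.congr_right.mp (congrArg Subtype.val (c.injective (hu.1.2.trans hw.1.2.symm)))
  · refine (hf i).anti fun x y hxy => ?_
    simp only [deleteIncidenceSet_adj, fromEdgeSet_adj, Set.mem_ofPred_eq, mem_edgeSet] at hxy ⊢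
    obtain ⟨⟨⟨hxy, hcol⟩, hne⟩, hxv, hyv⟩ := hxy
    have hinc : s(x, y) ∉ G.incidenceSet v := by
      simp [mk'_mem_incidenceSet_iff, Ne.symm hxv, Ne.symm hyv]
    rw [dif_neg hinc] at hcol
    exact ⟨⟨⟨hxy, hxv, hyv⟩, hcol⟩, hne⟩

theorem hasArboricityLE_of_two_mul_card_edgeFinset_le [Fintype V] [DecidableEq V]
    (G : SimpleGraph V) [DecidableRel G.Adj] {k : ℕ} (hk : 0 < k)
    (h : 2 * #G.edgeFinset ≤ k * (k + 2)) : HasArboricityLE G k := by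
  induction hm : #G.edgeFinset using Nat.strong_induction_on generalizing G with
  | _ m ih =>
    rcases eq_or_ne G ⊥ with rfl | hG
    · exact ⟨fun _ => ⟨0, hk⟩, fun i => by simp⟩
    obtain ⟨v, hv0, hvk⟩ : ∃ v, 0 < G.degree v ∧ G.degree v ≤ k := by
      by_contra! hcon
      have := mul_succ_le_two_mul_card_edgeFinset hG (d := k + 1) hcon
      nlinarith
    have hm0 : 0 < m := hm ▸ card_pos.mpr (edgeFinset_nonempty.mpr hG)
    have hcard := G.card_edgeFinset_deleteIncidenceSet v
    exact .of_deleteIncidenceSet hvk (ih _ (by omega) _ (by omega) rfl)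

end

/-- Every graph with `m ≥ 1` edges has arboricity at most `⌊√(2m)⌋`. -/
theorem arboricity_le_sqrt {V : Type*} [Fintype V] [DecidableEq V]
    (G : SimpleGraph V) [DecidableRel G.Adj] (hm : 1 ≤ G.edgeFinset.card) :
    HasArboricityLE G (Nat.sqrt (2 * G.edgeFinset.card)) :=
  hasArboricityLE_of_two_mul_card_edgeFinset_le G (Nat.sqrt_pos.mpr (by omega))
    (by have := Nat.sqrt_le_add (2 * G.edgeFinset.card); linarith)
end

section
/- For a finite simple graph G on n vertices with m edges and arboricity at most α, the sum over all vertices u of d⁺(u)·deg(u) is at most 2·m·α, where d⁺(u) is the out-degree of u in the degree orientation. -/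
/-! Ordering vertices by `(degree, vertex)` lexicographically, each edge is counted in
`∑ u, d⁺(u)·deg(u)` exactly once, with the smaller of its two endpoint degrees. In a forest,
rooting every component, each edge joins a vertex to its parent; charging the edge to that child
endpoint charges every vertex at most once, so the edges of one forest contribute at most
`∑ v, deg v = 2m`, and the `α` forests at most `2mα`. -/

open Finset

theorem Sym2.inf_le_of_mem {α : Type*} [SemilatticeInf α] {e : Sym2 α} {a : α} (h : a ∈ e) :
    e.inf ≤ a := by
  induction e with
  | _ x y => rcases Sym2.mem_iff.1 h with rfl | rfl <;> simp

namespace SimpleGraph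

variable {V : Type*} {F : SimpleGraph V}

theorem IsAcyclic.eq_penultimate_of_adj_of_dist_lt_s7 (hF : F.IsAcyclic)
    {r v w : V} {q : F.Walk r v} (hq : q.IsPath) (hadj : F.Adj v w) (hw : F.Reachable r w)
    (hlt : F.dist r w < F.dist r v) : w = q.penultimate := by
  classical
  obtain ⟨p, hp, hpw⟩ := hw.exists_path_of_dist
  have hv : v ∉ p.support := fun hv ↦ by
    have := (dist_le (p.takeUntil v hv)).trans (p.length_takeUntil_le_length hv)
    omega
  exact hF.eq_penultimate_of_adj_end hq hadj
    (hF.mem_support_of_ne_mem_support_of_adj_of_isPath hq hp hadj hv)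

theorem IsAcyclic.exists_parent (hF : F.IsAcyclic) :
    ∃ parent : V → V, ∀ e ∈ F.edgeSet, ∃ v, e = s(v, parent v) := by
  set root : V → V := fun v ↦ (F.connectedComponentMk v).out
  have hroot : ∀ v, F.Reachable (root v) v := fun v ↦
    ConnectedComponent.exact (F.connectedComponentMk v).out_eq
  choose q hq using fun v ↦ (hroot v).exists_isPath
  refine ⟨fun v ↦ (q v).penultimate, ?_⟩
  -- An edge's endpoint farther from the common root has the other endpoint as its parent.
  have hfar : ∀ a b, F.Adj a b → F.dist (root a) b < F.dist (root a) a →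
      ∃ v, s(a, b) = s(v, (q v).penultimate) := fun a b hab hlt ↦
    ⟨a, by rw [← hF.eq_penultimate_of_adj_of_dist_lt_s7 (hq a) hab
      ((hroot a).trans hab.reachable) hlt]⟩
  rintro ⟨a, b⟩ hab
  have hsame : root a = root b := congrArg Quot.out (ConnectedComponent.sound hab.reachable)
  rcases lt_or_gt_of_ne (hF.dist_ne_of_adj hab (hroot a)) with hlt | hlt
  · obtain ⟨v, hv⟩ := hfar b a hab.symm (hsame ▸ hlt)
    exact ⟨v, Sym2.eq_swap.trans hv⟩
  · exact hfar a b hab hlt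

theorem IsAcyclic.sum_le_sum_of_forall_mem_le {M : Type*} [AddCommMonoid M] [PartialOrder M]
    [IsOrderedAddMonoid M] [Fintype V] (hF : F.IsAcyclic)
    {s : Finset (Sym2 V)} (hs : ↑s ⊆ F.edgeSet) {f : Sym2 V → M} {w : V → M}
    (hf : ∀ e ∈ s, 0 ≤ f e) (hw : ∀ v, 0 ≤ w v) (hfw : ∀ e ∈ s, ∀ v ∈ e, f e ≤ w v) :
    ∑ e ∈ s, f e ≤ ∑ v, w v := by
  classical
  obtain ⟨parent, hparent⟩ := hF.exists_parent
  set T := univ.filter fun v ↦ s(v, parent v) ∈ s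
  have hsT : s = T.image fun v ↦ s(v, parent v) := by
    ext e
    simp only [T, mem_image, mem_filter, mem_univ, true_and]
    refine ⟨fun he ↦ ?_, fun ⟨v, hv, hve⟩ ↦ hve ▸ hv⟩
    obtain ⟨v, rfl⟩ := hparent e (hs he)
    exact ⟨v, he, rfl⟩
  calc ∑ e ∈ s, f e ≤ ∑ v ∈ T, f s(v, parent v) := by
        nth_rw 1 [hsT]
        exact sum_image_le_of_nonneg fun e he ↦ hf e (hsT ▸ he)
    _ ≤ ∑ v ∈ T, w v :=
        sum_le_sum fun v hv ↦ hfw _ (mem_filter.1 hv).2 v (Sym2.mem_mk_left _ _)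
    _ ≤ ∑ v, w v := sum_le_univ_sum_of_nonneg hw

end SimpleGraph

section DegreeOrientation

variable {V : Type*} [Fintype V] [LinearOrder V] (G : SimpleGraph V) [DecidableRel G.Adj]

theorem degPrec_iff_toLex_lt {u v : V} :
    DegPrec G u v ↔ toLex (G.degree u, u) < toLex (G.degree v, v) := by
  rw [DegPrec, Prod.Lex.toLex_lt_toLex]

theorem degree_le_of_degPrec {u v : V} (h : DegPrec G u v) : G.degree u ≤ G.degree v :=
  h.elim le_of_lt fun h ↦ h.1.le

theorem sum_outDeg_mul_degree_eq :
    ∑ u, outDeg G u * G.degree u = ∑ e ∈ G.edgeFinset, (e.map fun v ↦ G.degree v).inf := by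
  have hout : ∀ u, outDeg G u * G.degree u =
      ∑ v ∈ (G.neighborFinset u).filter (DegPrec G u), G.degree u := fun u ↦ by
    rw [sum_const, smul_eq_mul, outDeg]
  simp_rw [hout]
  rw [sum_sigma']
  refine sum_bij (fun x _ ↦ s(x.1, x.2)) ?_ ?_ ?_ ?_
  · rintro ⟨u, v⟩ huv
    simp_all
  · rintro ⟨u, v⟩ huv ⟨u', v'⟩ huv' h
    simp only [mem_sigma, mem_filter, degPrec_iff_toLex_lt] at huv huv'
    rcases Sym2.eq_iff.1 h with ⟨rfl, rfl⟩ | ⟨rfl, rfl⟩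
    · rfl
    · exact absurd huv.2.2 huv'.2.2.asymm
  · rintro ⟨a, b⟩ hab
    rw [SimpleGraph.mem_edgeFinset, SimpleGraph.mem_edgeSet] at hab
    have hne : toLex (G.degree a, a) ≠ toLex (G.degree b, b) := fun h ↦
      hab.ne (congrArg Prod.snd (toLex.injective h))
    rcases hne.lt_or_gt with h | h
    · exact ⟨⟨a, b⟩, by simp [hab, degPrec_iff_toLex_lt, h], rfl⟩
    · exact ⟨⟨b, a⟩, by simp [hab.symm, degPrec_iff_toLex_lt, h], Sym2.eq_swap⟩
  · rintro ⟨u, v⟩ huv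
    simp only [mem_sigma, mem_filter] at huv
    simp [degree_le_of_degPrec G huv.2.2]

end DegreeOrientation

/-- `Σ_u d⁺(u)·deg(u) ≤ 2·m·α` for graphs of arboricity at most `α`. -/
theorem sum_outDeg_mul_degree_le {V : Type*} [Fintype V] [LinearOrder V]
    (G : SimpleGraph V) [DecidableRel G.Adj] (α : ℕ) (hG : HasArboricityLE G α) :
    ∑ u, outDeg G u * G.degree u ≤ 2 * G.edgeFinset.card * α := by
  classical
  obtain ⟨c, hc⟩ := hG
  have hclass : ∀ i, ∑ e ∈ G.edgeFinset with c e = i, (e.map fun v ↦ G.degree v).inf ≤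
      2 * #G.edgeFinset := fun i ↦ by
    rw [← G.sum_degrees_eq_twice_card_edges]
    refine (hc i).sum_le_sum_of_forall_mem_le ?_ (fun _ _ ↦ Nat.zero_le _)
      (fun _ ↦ Nat.zero_le _) fun e _ v hv ↦ Sym2.inf_le_of_mem (Sym2.mem_map.2 ⟨v, hv, rfl⟩)
    intro e he
    rw [mem_coe, mem_filter, SimpleGraph.mem_edgeFinset] at he
    rw [SimpleGraph.edgeSet_fromEdgeSet]
    exact ⟨he, G.not_isDiag_of_mem_edgeSet he.1⟩
  calc ∑ u, outDeg G u * G.degree u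
      = ∑ i, ∑ e ∈ G.edgeFinset with c e = i, (e.map fun v ↦ G.degree v).inf := by
        rw [sum_outDeg_mul_degree_eq, sum_fiberwise]
    _ ≤ ∑ _i : Fin α, 2 * #G.edgeFinset := sum_le_sum fun i _ ↦ hclass i
    _ = 2 * #G.edgeFinset * α := by simp [mul_comm]
end

section
/- Let G be a finite simple graph. For every vertex u, d⁺(u) ≤ √(2m), where d⁺(u) is the out-degree of u in the degree orientation and m is the number of edges. -/
lemma outDeg_sq_le {V : Type*} [Fintype V] [LinearOrder V]
    (G : SimpleGraph V) [DecidableRel G.Adj] (u : V) :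
    outDeg G u ^ 2 ≤ 2 * G.edgeFinset.card := by
  set S := (G.neighborFinset u).filter (fun v => DegPrec G u v) with hS
  have h1 : outDeg G u ^ 2 ≤ ∑ v ∈ S, G.degree v := by
    have : outDeg G u ^ 2 = ∑ _v ∈ S, outDeg G u := by
      simp [outDeg, sq, hS]
    rw [this]
    apply Finset.sum_le_sum
    intro v hv
    rw [Finset.mem_filter] at hv
    have hdu : outDeg G u ≤ G.degree u := by
      rw [← SimpleGraph.card_neighborFinset_eq_degree]
      exact Finset.card_filter_le _ _
    have : G.degree u ≤ G.degree v := by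
      rcases hv.2 with h | h
      · exact h.le
      · exact h.1.le
    omega
  have h2 : ∑ v ∈ S, G.degree v ≤ ∑ v, G.degree v :=
    Finset.sum_le_sum_of_subset (Finset.subset_univ S)
  have h3 := SimpleGraph.sum_degrees_eq_twice_card_edges G
  omega

/-- The maximum out-degree in the degree orientation is at most `√(2m)`. -/
theorem outDeg_le_sqrt_two_mul_card {V : Type*} [Fintype V] [LinearOrder V]
    (G : SimpleGraph V) [DecidableRel G.Adj] (u : V) :
    (outDeg G u : ℝ) ≤ Real.sqrt (2 * G.edgeFinset.card) := by
  rw [show ((2 : ℝ) * G.edgeFinset.card) = ((2 * G.edgeFinset.card : ℕ) : ℝ) by push_cast; ring,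
    Real.le_sqrt (by positivity)]
  · exact_mod_cast outDeg_sq_le G u
  · positivity
end
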